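/- arXiv:math/0302352 — 3 statements merged into one kernel-verified Lean document; each statement's English description precedes it below -/
import Mathlib

section
/- Let 𝔤 be a finite-dimensional complex Lie algebra and let 𝔫_ℝ be a real Lie subalgebra of 𝔤 (𝔤 viewed as a real Lie algebra by restriction of scalars) such that ad(n) : 𝔤 → 𝔤 is a nilpotent endomorphism for every n ∈ 𝔫_ℝ. Write i𝔫_ℝ = {i·m : m ∈ 𝔫_ℝ}, where i is the imaginary unit acting by complex scalar multiplication. Let X ∈ 𝔤 satisfy ⁅n, X⁆ ∈ i𝔫_ℝ for every n ∈ 𝔫_ℝ, and suppose the real-linear map 𝔫_ℝ → 𝔤, n ↦ ⁅n, X⁆, is injective. Then for every Y ∈ X + i𝔫_ℝ there exist finitely many elements n₁, …, n_r ∈ 𝔫_ℝ such that exp(ad n₁) ∘ ⋯ ∘ exp(ad n_r) (X) = Y. -/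
/-!
Write `⁅n, X⁆ = i • θ n` for `n ∈ 𝔫`. Then `θ` is an injective derivation of `𝔫`, so it maps every
term `𝔫ᵏ` of the lower central series onto itself; `𝔫` is nilpotent by Engel's theorem, so the
series reaches `0`. For `n ∈ 𝔫ᵏ`, `exp (ad n) (X + i a) ≡ X + i (a + θ n)` modulo `i 𝔫ᵏ⁺¹`, so
choosing `θ n = c` moves `X + i a` to `X + i (a + c)` up to an error lying one step deeper in the
series, and descending induction on `k` removes the error.
-/

open LieAlgebra

/-- The exponential of a nilpotent endomorphism over a field of characteristic zero:
the finite sum `∑ i, N^i / i!` (all terms with `i ≥ nilpotencyClass N` vanish when `N`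
is nilpotent). -/
noncomputable def expNil {k V : Type*} [Field k] [AddCommGroup V] [Module k V]
    (N : Module.End k V) : Module.End k V :=
  ∑ i ∈ Finset.range (nilpotencyClass N), ((i.factorial : k)⁻¹) • N ^ i

open LieModule

section ExpNil

variable {k V : Type*} [Field k] [AddCommGroup V] [Module k V]

theorem expNil_eq_sum_range {N : Module.End k V} (hN : IsNilpotent N) {b : ℕ}
    (hb : nilpotencyClass N ≤ b) :
    expNil N = ∑ i ∈ Finset.range b, ((i.factorial : k)⁻¹) • N ^ i := by
  refine Finset.sum_subset (Finset.range_subset_range.mpr hb) fun i _ hi => ?_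
  rw [pow_eq_zero_of_le (by simpa using hi) (pow_nilpotencyClass hN), smul_zero]

theorem expNil_apply_sub_sub_mem {K : Type*} [Field K] [Algebra K k] [Module K V]
    [IsScalarTower K k V] {N : Module.End k V} (hN : IsNilpotent N) {U U' : Submodule K V}
    (hU' : U' ≤ U) (hNU : ∀ u ∈ U, N u ∈ U') {v : V} (hv : N v ∈ U) :
    expNil N v - v - N v ∈ U' := by
  have hpow : ∀ i, (N ^ (i + 2)) v ∈ U' := by
    intro i
    induction i with
    | zero => exact hNU _ hv
    | succ i ih => rw [pow_succ', Module.End.mul_apply]; exact hNU _ (hU' ih)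
  rw [expNil_eq_sum_range hN (Nat.le_add_right _ 2), Finset.sum_range_succ',
    Finset.sum_range_succ']
  simp only [LinearMap.add_apply, LinearMap.sum_apply, LinearMap.smul_apply, pow_zero, pow_one,
    Nat.factorial_zero, Nat.factorial_one, Nat.cast_one, inv_one, one_smul, Module.End.one_apply,
    zero_add, add_sub_cancel_right]
  refine Submodule.sum_mem _ fun i _ => ?_
  rw [← map_natCast (algebraMap K k), ← map_inv₀, algebraMap_smul]
  exact U'.smul_mem _ (hpow i)

end ExpNil

namespace LieDerivation

variable {R L : Type*} [CommRing R] [LieRing L] [LieAlgebra R L]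

theorem mapsTo_lowerCentralSeries (D : LieDerivation R L L) (k : ℕ) :
    Set.MapsTo D (lowerCentralSeries R L L k) (lowerCentralSeries R L L k) := by
  induction k with
  | zero => simp
  | succ k ih =>
    intro x hx
    rw [SetLike.mem_coe, ← LieSubmodule.mem_toSubmodule, lowerCentralSeries_succ,
      LieSubmodule.lieIdeal_oper_eq_linear_span'] at hx ⊢
    refine Submodule.span_induction ?_ (by simp) (fun _ _ _ _ => by rw [map_add]; exact add_mem)
      (fun r _ _ h => by rw [map_smul]; exact Submodule.smul_mem _ r h) hx
    rintro _ ⟨y, -, z, hz, rfl⟩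
    rw [apply_lie_eq_add]
    exact add_mem (Submodule.subset_span ⟨y, trivial, D z, ih hz, rfl⟩)
      (Submodule.subset_span ⟨D y, trivial, z, hz, rfl⟩)

theorem surjOn_lowerCentralSeries {K : Type*} [Field K] [LieAlgebra K L] [FiniteDimensional K L]
    (D : LieDerivation K L L) (hD : Function.Injective D) (k : ℕ) :
    Set.SurjOn D (lowerCentralSeries K L L k) (lowerCentralSeries K L L k) := by
  let Dk := (D : L →ₗ[K] L).restrict (D.mapsTo_lowerCentralSeries k)
  have hDk : Function.Surjective Dk :=
    LinearMap.injective_iff_surjective.mp fun x y h => Subtype.ext (hD congr($h.1))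
  intro c hc
  obtain ⟨⟨n, hn⟩, h⟩ := hDk ⟨c, hc⟩
  exact ⟨n, hn, congr($h.1)⟩

end LieDerivation

section ExpAdOrbit

variable (k : Type*) {𝔤 : Type*} [Field k] [LieRing 𝔤] [LieAlgebra k 𝔤]

def expAdOrbit (s : Set 𝔤) (v : 𝔤) : Set 𝔤 :=
  {w | ∃ l : List 𝔤, (∀ n ∈ l, n ∈ s) ∧ (l.map fun n => expNil (ad k 𝔤 n)).prod v = w}

variable {k} {s : Set 𝔤} {u v w : 𝔤}

theorem mem_expAdOrbit_self : v ∈ expAdOrbit k s v :=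
  ⟨[], by simp, rfl⟩

theorem mem_expAdOrbit_trans (hw : w ∈ expAdOrbit k s v) (hu : u ∈ expAdOrbit k s w) :
    u ∈ expAdOrbit k s v := by
  obtain ⟨l₁, hl₁, rfl⟩ := hw
  obtain ⟨l₂, hl₂, rfl⟩ := hu
  refine ⟨l₂ ++ l₁, fun n hn => (List.mem_append.mp hn).elim (hl₂ n) (hl₁ n), ?_⟩
  rw [List.map_append, List.prod_append, Module.End.mul_apply]

theorem expNil_ad_apply_mem_expAdOrbit {n : 𝔤} (hn : n ∈ s) :
    expNil (ad k 𝔤 n) v ∈ expAdOrbit k s v :=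
  ⟨[n], by simpa using hn, by simp⟩

end ExpAdOrbit

theorem LieSubalgebra.isNilpotent_of_forall_isNilpotent_ad {R A 𝔤 : Type*} [CommRing R]
    [CommRing A] [LieRing 𝔤] [LieAlgebra A 𝔤] [LieAlgebra R 𝔤]
    [IsNoetherian R 𝔤] {𝔫 : LieSubalgebra R 𝔤}
    (hnil : ∀ n ∈ 𝔫, IsNilpotent (ad A 𝔤 n)) : LieRing.IsNilpotent 𝔫 := by
  refine (LieAlgebra.isNilpotent_iff_forall (R := R)).mpr fun n => ?_
  refine 𝔫.isNilpotent_ad_of_isNilpotent_ad ?_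
  obtain ⟨c, hc⟩ := hnil n n.2
  have hcoe : ⇑(ad R 𝔤 (n : 𝔤)) = ad A 𝔤 (n : 𝔤) := rfl
  exact ⟨c, LinearMap.ext fun y => by simpa [Module.End.pow_apply, hcoe] using congr($hc y)⟩

section

variable {𝔤 : Type*} [LieRing 𝔤] [LieAlgebra ℂ 𝔤] [LieAlgebra ℝ 𝔤] [IsScalarTower ℝ ℂ 𝔤]
  {𝔫 : LieSubalgebra ℝ 𝔤} {X : 𝔤}

variable (𝔫 X) in
/-- The `m ∈ 𝔫` with `⁅n, X⁆ = i • m`, namely `i • ⁅X, n⁆`; a derivation because `ad X` is one. -/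
def bracketDivI (hstab : ∀ n ∈ 𝔫, ∃ m ∈ 𝔫, ⁅n, X⁆ = Complex.I • m) : LieDerivation ℝ 𝔫 𝔫 where
  toFun n := ⟨Complex.I • ⁅X, (n : 𝔤)⁆, by
    obtain ⟨m, hm, h⟩ := hstab n n.2
    rwa [← lie_skew, h, smul_neg, smul_smul, Complex.I_mul_I, neg_one_smul, neg_neg]⟩
  map_add' a b := Subtype.ext <| by simp
  map_smul' r a := Subtype.ext <| by simp [smul_comm Complex.I r]
  leibniz' a b := Subtype.ext <| by
    show Complex.I • ⁅X, ⁅(a : 𝔤), (b : 𝔤)⁆⁆ =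
      ⁅(a : 𝔤), Complex.I • ⁅X, (b : 𝔤)⁆⁆ - ⁅(b : 𝔤), Complex.I • ⁅X, (a : 𝔤)⁆⁆
    rw [leibniz_lie, sub_eq_add_neg, lie_skew, lie_smul, smul_lie, smul_add, add_comm]

theorem I_smul_bracketDivI_apply (hstab : ∀ n ∈ 𝔫, ∃ m ∈ 𝔫, ⁅n, X⁆ = Complex.I • m) (n : 𝔫) :
    Complex.I • (bracketDivI 𝔫 X hstab n : 𝔤) = ⁅(n : 𝔤), X⁆ := by
  change Complex.I • Complex.I • ⁅X, (n : 𝔤)⁆ = _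
  rw [smul_smul, Complex.I_mul_I, neg_one_smul, lie_skew]

theorem bracketDivI_injective (hstab : ∀ n ∈ 𝔫, ∃ m ∈ 𝔫, ⁅n, X⁆ = Complex.I • m)
    (hinj : Function.Injective fun n : 𝔫 => ⁅(n : 𝔤), X⁆) :
    Function.Injective (bracketDivI 𝔫 X hstab) := fun a b h =>
  hinj <| by simp only [← I_smul_bracketDivI_apply hstab, h]

theorem exists_expNil_ad_apply_eq (hstab : ∀ n ∈ 𝔫, ∃ m ∈ 𝔫, ⁅n, X⁆ = Complex.I • m) {k : ℕ}
    {n : 𝔫} (hn : n ∈ lowerCentralSeries ℝ 𝔫 𝔫 k) (hn_nil : IsNilpotent (ad ℂ 𝔤 n)) (a : 𝔫) :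
    ∃ δ ∈ lowerCentralSeries ℝ 𝔫 𝔫 (k + 1), expNil (ad ℂ 𝔤 n) (X + Complex.I • (a : 𝔤)) =
      X + Complex.I • ((a + bracketDivI 𝔫 X hstab n + δ : 𝔫) : 𝔤) := by
  set θ := bracketDivI 𝔫 X hstab
  let ι : 𝔫 →ₗ[ℝ] 𝔤 := DistribSMul.toLinearMap ℝ 𝔤 Complex.I ∘ₗ (𝔫.incl : 𝔫 →ₗ[ℝ] 𝔤)
  let U : ℕ → Submodule ℝ 𝔤 := fun j => (lowerCentralSeries ℝ 𝔫 𝔫 j).toSubmodule.map ι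
  have hbracket : ∀ c : 𝔫, ⁅n, c⁆ ∈ lowerCentralSeries ℝ 𝔫 𝔫 (k + 1) := fun c => by
    rw [lowerCentralSeries_succ, ← lie_skew]
    exact neg_mem (LieSubmodule.lie_mem_lie (LieSubmodule.mem_top c) hn)
  have hU : ∀ c ∈ lowerCentralSeries ℝ 𝔫 𝔫 k, ad ℂ 𝔤 n (ι c) ∈ U (k + 1) := fun c _ =>
    ⟨⁅n, c⁆, hbracket c, by simp [ι]⟩
  have hv : ad ℂ 𝔤 n (X + ι a) = ι (θ n + ⁅n, a⁆) := by
    simp [ι, lie_smul, smul_add, ← I_smul_bracketDivI_apply hstab n, θ]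
  obtain ⟨δ, hδ, hδeq⟩ := expNil_apply_sub_sub_mem (K := ℝ) hn_nil (U := U k) (U' := U (k + 1))
    (Submodule.map_mono (antitone_lowerCentralSeries ℝ 𝔫 𝔫 k.le_succ))
    (by rintro _ ⟨c, hc, rfl⟩; exact hU c hc)
    (by rw [hv]; exact ⟨θ n + ⁅n, a⁆, add_mem (θ.mapsTo_lowerCentralSeries k hn)
      (antitone_lowerCentralSeries ℝ 𝔫 𝔫 k.le_succ (hbracket a)), rfl⟩)
  refine ⟨⁅n, a⁆ + δ, add_mem (hbracket a) hδ, ?_⟩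
  have hι : ∀ c : 𝔫, Complex.I • (c : 𝔤) = ι c := fun _ => rfl
  rw [eq_sub_iff_add_eq, eq_sub_iff_add_eq, hv] at hδeq
  rw [hι, hι, ← hδeq]
  simp only [map_add]
  abel

theorem add_I_smul_mem_expAdOrbit [FiniteDimensional ℂ 𝔤]
    (hnil : ∀ n ∈ 𝔫, IsNilpotent (ad ℂ 𝔤 n))
    (hstab : ∀ n ∈ 𝔫, ∃ m ∈ 𝔫, ⁅n, X⁆ = Complex.I • m)
    (hinj : Function.Injective fun n : 𝔫 => ⁅(n : 𝔤), X⁆) (a c : 𝔫) :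
    X + Complex.I • ((a + c : 𝔫) : 𝔤) ∈ expAdOrbit ℂ 𝔫 (X + Complex.I • (a : 𝔤)) := by
  have : FiniteDimensional ℝ 𝔤 := .trans ℝ ℂ 𝔤
  have := LieSubalgebra.isNilpotent_of_forall_isNilpotent_ad hnil
  obtain ⟨p, hp⟩ := IsNilpotent.nilpotent ℝ 𝔫 𝔫
  suffices h : ∀ k ≤ p, ∀ a c : 𝔫, c ∈ lowerCentralSeries ℝ 𝔫 𝔫 k →
      X + Complex.I • ((a + c : 𝔫) : 𝔤) ∈ expAdOrbit ℂ 𝔫 (X + Complex.I • (a : 𝔤)) from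
    h 0 p.zero_le a c (by simp)
  intro k hk
  induction hk using Nat.decreasingInduction with
  | self =>
    intro a c hc
    rw [hp, LieSubmodule.mem_bot] at hc
    simpa [hc] using mem_expAdOrbit_self
  | of_succ k _ ih =>
    intro a c hc
    obtain ⟨n, hn, rfl⟩ := (bracketDivI 𝔫 X hstab).surjOn_lowerCentralSeries
      (bracketDivI_injective hstab hinj) k hc
    obtain ⟨δ, hδ, hexp⟩ := exists_expNil_ad_apply_eq hstab hn (hnil n n.2) a
    refine mem_expAdOrbit_trans (hexp ▸ expNil_ad_apply_mem_expAdOrbit n.2) ?_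
    simpa using ih (a + bracketDivI 𝔫 X hstab n + δ) (-δ) (neg_mem hδ)

end

/-- Let `𝔤` be a finite-dimensional complex Lie algebra, and `𝔫ℝ` a real Lie
subalgebra of `𝔤` (viewed as a real Lie algebra by restriction of scalars) all of whose
elements are ad-nilpotent.  If `X ∈ 𝔤` satisfies `⁅n, X⁆ ∈ i·𝔫ℝ` for every `n ∈ 𝔫ℝ` and
`n ↦ ⁅n, X⁆` is injective on `𝔫ℝ`, then every `Y ∈ X + i·𝔫ℝ` is of the form
`exp(ad n₁) ∘ ⋯ ∘ exp(ad n_r) (X)` with all `nᵢ ∈ 𝔫ℝ`. -/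
theorem orbit_contains_imaginary_affine_subspace
    {𝔤 : Type*} [LieRing 𝔤] [LieAlgebra ℂ 𝔤] [LieAlgebra ℝ 𝔤] [IsScalarTower ℝ ℂ 𝔤]
    [FiniteDimensional ℂ 𝔤]
    (𝔫ℝ : LieSubalgebra ℝ 𝔤)
    (hnil : ∀ n ∈ 𝔫ℝ, IsNilpotent (ad ℂ 𝔤 n))
    (X : 𝔤)
    (hstab : ∀ n ∈ 𝔫ℝ, ∃ m ∈ 𝔫ℝ, ⁅n, X⁆ = Complex.I • m)
    (hinj : Function.Injective fun n : 𝔫ℝ => ⁅(n : 𝔤), X⁆) :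
    ∀ m ∈ 𝔫ℝ,
      ∃ l : List 𝔤, (∀ n ∈ l, n ∈ 𝔫ℝ) ∧
        (l.map fun n => expNil (ad ℂ 𝔤 n)).prod X = X + Complex.I • m := by
  intro m hm
  simpa [expAdOrbit] using add_I_smul_mem_expAdOrbit hnil hstab hinj 0 ⟨m, hm⟩
end

section
/- Let 𝔤 be a finite-dimensional Lie algebra over a field of characteristic zero whose center is trivial. Let X ∈ 𝔤 be such that for every element c of the centralizer of X, the endomorphism ad(c) : 𝔤 → 𝔤 is semisimple. Let 𝔫 ⊆ 𝔤 be a linear subspace such that ad(n) is nilpotent for every n ∈ 𝔫 and ⁅n, X⁆ ∈ 𝔫 for every n ∈ 𝔫. Then the linear map 𝔫 → 𝔫, n ↦ ⁅n, X⁆, is bijective. -/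
open LieAlgebra

/-- Let `𝔤` be a finite-dimensional Lie algebra over a field of characteristic
zero with trivial center, and `X ∈ 𝔤` such that `ad c` is semisimple for every `c` in the
centralizer of `X`.  If `𝔫 ⊆ 𝔤` is a linear subspace consisting of ad-nilpotent elements
with `⁅n, X⁆ ∈ 𝔫` for all `n ∈ 𝔫`, then `n ↦ ⁅n, X⁆` is a bijection of `𝔫`. -/
theorem bracket_with_X_bijective_on_nilpotent_subspace
    {k 𝔤 : Type*} [Field k] [CharZero k] [LieRing 𝔤] [LieAlgebra k 𝔤]
    [FiniteDimensional k 𝔤]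
    (hcenter : LieAlgebra.center k 𝔤 = ⊥)
    (X : 𝔤)
    (hss : ∀ c : 𝔤, ⁅c, X⁆ = 0 → (ad k 𝔤 c).IsSemisimple)
    (𝔫 : Submodule k 𝔤)
    (hnil : ∀ n ∈ 𝔫, IsNilpotent (ad k 𝔤 n))
    (hstab : ∀ n ∈ 𝔫, ⁅n, X⁆ ∈ 𝔫) :
    Function.Bijective fun n : 𝔫 => (⟨⁅(n : 𝔤), X⁆, hstab n n.2⟩ : 𝔫) := by
  let f : 𝔫 →ₗ[k] 𝔫 :=
    { toFun := fun n => ⟨⁅(n : 𝔤), X⁆, hstab n n.2⟩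
      map_add' := by intro a b; ext; simp [add_lie]
      map_smul' := by intro c a; ext; simp [smul_lie] }
  have hinj : Function.Injective f := by
    rw [← LinearMap.ker_eq_bot, LinearMap.ker_eq_bot']
    intro n hn
    have hb : ⁅(n : 𝔤), X⁆ = 0 := congrArg Subtype.val hn
    have hsemi := hss n hb
    have hnilp := hnil n n.2
    have hz : ad k 𝔤 (n : 𝔤) = 0 :=
      Module.End.eq_zero_of_isNilpotent_isSemisimple hnilp hsemi
    have hcen : (n : 𝔤) ∈ LieAlgebra.center k 𝔤 := by
      intro y
      have := LinearMap.congr_fun hz y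
      rw [← lie_skew, neg_eq_zero]; simpa using this
    have : (n : 𝔤) = 0 := by
      rw [hcenter] at hcen
      simpa using hcen
    exact Subtype.ext this
  exact ⟨hinj, LinearMap.surjective_of_injective hinj⟩
end

section
/- Let k be a field of characteristic zero, 𝔤 a finite-dimensional Lie algebra over k, and 𝔫 ⊆ 𝔤 a Lie subalgebra such that ad(n) : 𝔤 → 𝔤 is nilpotent for every n ∈ 𝔫. Let X ∈ 𝔤 be such that ⁅n, X⁆ ∈ 𝔫 for every n ∈ 𝔫 and the linear map 𝔫 → 𝔫, n ↦ ⁅n, X⁆, is bijective. Let 𝔫^j denote the j-th term of the lower central series of 𝔫. Then for every j ≥ 0: (a) ⁅n, X⁆ ∈ 𝔫^j for every n ∈ 𝔫^j; and (b) for every Y ∈ X + 𝔫^j there exists n ∈ 𝔫^j such that exp(ad n)(X) − Y ∈ 𝔫^{j+1}. -/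
open LieAlgebra

/-- The lower central series of a Lie subalgebra `𝔫 ⊆ 𝔤`, realized as submodules of `𝔤`:
`𝔫⁰ = 𝔫` and `𝔫^{j+1} = span ⁅𝔫, 𝔫^j⁆`. -/
def lcs {k 𝔤 : Type*} [Field k] [LieRing 𝔤] [LieAlgebra k 𝔤]
    (𝔫 : LieSubalgebra k 𝔤) : ℕ → Submodule k 𝔤
  | 0 => 𝔫.toSubmodule
  | j + 1 => Submodule.span k {z : 𝔤 | ∃ a ∈ 𝔫, ∃ b ∈ lcs 𝔫 j, z = ⁅a, b⁆}

section Aux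

variable {k 𝔤 : Type*} [Field k] [LieRing 𝔤] [LieAlgebra k 𝔤]

lemma bracket_mem_lcs_succ (𝔫 : LieSubalgebra k 𝔤) {a b : 𝔤} {j : ℕ}
    (ha : a ∈ 𝔫) (hb : b ∈ lcs 𝔫 j) : ⁅a, b⁆ ∈ lcs 𝔫 (j + 1) :=
  Submodule.subset_span ⟨a, ha, b, hb, rfl⟩

lemma lcs_succ_le (𝔫 : LieSubalgebra k 𝔤) : ∀ j, lcs 𝔫 (j + 1) ≤ lcs 𝔫 j
  | 0 => by
      apply Submodule.span_le.2
      rintro z ⟨a, ha, b, hb, rfl⟩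
      exact 𝔫.lie_mem ha hb
  | (j + 1) => by
      apply Submodule.span_le.2
      rintro z ⟨a, ha, b, hb, rfl⟩
      exact bracket_mem_lcs_succ 𝔫 ha (lcs_succ_le 𝔫 j hb)

lemma lcs_le_base (𝔫 : LieSubalgebra k 𝔤) : ∀ j, lcs 𝔫 j ≤ 𝔫.toSubmodule
  | 0 => le_rfl
  | (j + 1) => (lcs_succ_le 𝔫 j).trans (lcs_le_base 𝔫 j)

lemma part_a (𝔫 : LieSubalgebra k 𝔤) (X : 𝔤) (hstab : ∀ n ∈ 𝔫, ⁅n, X⁆ ∈ 𝔫) :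
    ∀ j, ∀ n ∈ lcs 𝔫 j, ⁅n, X⁆ ∈ lcs 𝔫 j
  | 0 => fun n hn => hstab n hn
  | (j + 1) => by
      intro n hn
      induction hn using Submodule.span_induction with
      | mem z hz =>
          obtain ⟨a, ha, b, hb, rfl⟩ := hz
          rw [lie_lie]
          refine sub_mem (bracket_mem_lcs_succ 𝔫 ha (part_a 𝔫 X hstab j b hb)) ?_
          rw [← lie_skew]
          exact neg_mem (bracket_mem_lcs_succ 𝔫 (hstab a ha) hb)
      | zero => simp
      | add x y _ _ hx hy => rw [add_lie]; exact add_mem hx hy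
      | smul c x _ hx => rw [smul_lie]; exact Submodule.smul_mem _ c hx

end Aux

lemma expNil_eq_sum {k V : Type*} [Field k] [AddCommGroup V] [Module k V]
    {N : Module.End k V} (hN : IsNilpotent N) {m : ℕ} (hm : nilpotencyClass N ≤ m) :
    expNil N = ∑ i ∈ Finset.range m, ((i.factorial : k)⁻¹) • N ^ i := by
  unfold expNil
  apply Finset.sum_subset (Finset.range_subset_range.2 hm)
  intro i _ hi
  have hci : nilpotencyClass N ≤ i := by simpa using hi
  have : N ^ i = 0 := by
    calc N ^ i = N ^ nilpotencyClass N * N ^ (i - nilpotencyClass N) := by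
          rw [← pow_add]; congr 1; omega
      _ = 0 := by rw [pow_nilpotencyClass hN, zero_mul]
  simp [this]


/-- Let `k` be a field of characteristic zero, `𝔤` a finite-dimensional Lie
algebra over `k`, `𝔫 ⊆ 𝔤` a Lie subalgebra of ad-nilpotent elements, and `X ∈ 𝔤` with
`⁅n, X⁆ ∈ 𝔫` for all `n ∈ 𝔫` and `n ↦ ⁅n, X⁆` bijective on `𝔫`.  Then for every `j`:
(a) each term `𝔫^j` of the lower central series of `𝔫` satisfies `⁅n, X⁆ ∈ 𝔫^j` for all
`n ∈ 𝔫^j`, and (b) for every `Y ∈ X + 𝔫^j` there is an `n ∈ 𝔫^j` with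
`exp(ad n)(X) - Y ∈ 𝔫^{j+1}`. -/
theorem lowerCentralSeries_inductive_step
    {k 𝔤 : Type*} [Field k] [CharZero k] [LieRing 𝔤] [LieAlgebra k 𝔤]
    [FiniteDimensional k 𝔤]
    (𝔫 : LieSubalgebra k 𝔤)
    (hnil : ∀ n ∈ 𝔫, IsNilpotent (ad k 𝔤 n))
    (X : 𝔤)
    (hstab : ∀ n ∈ 𝔫, ⁅n, X⁆ ∈ 𝔫)
    (hbij : Function.Bijective fun n : 𝔫 => (⟨⁅(n : 𝔤), X⁆, hstab n n.2⟩ : 𝔫)) :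
    ∀ j : ℕ,
      (∀ n ∈ lcs 𝔫 j, ⁅n, X⁆ ∈ lcs 𝔫 j) ∧
      (∀ Y : 𝔤, Y - X ∈ lcs 𝔫 j →
        ∃ n ∈ lcs 𝔫 j, expNil (ad k 𝔤 n) X - Y ∈ lcs 𝔫 (j + 1)) := by
  intro j
  have ha := part_a 𝔫 X hstab
  refine ⟨ha j, ?_⟩
  intro Y hY
  set f : 𝔤 →ₗ[k] 𝔤 := -(ad k 𝔤 X) with hf
  have hfapply : ∀ n : 𝔤, f n = ⁅n, X⁆ := fun n => by
    rw [hf]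
    show -⁅X, n⁆ = ⁅n, X⁆
    exact lie_skew n X
  have hmap : ∀ x ∈ lcs 𝔫 j, f x ∈ lcs 𝔫 j := fun x hx => by
    rw [hfapply]; exact ha j x hx
  let F : lcs 𝔫 j →ₗ[k] lcs 𝔫 j := f.restrict hmap
  have hFinj : Function.Injective F := by
    intro x y hxy
    have hx𝔫 : (x : 𝔤) ∈ 𝔫 := lcs_le_base 𝔫 j x.2
    have hy𝔫 : (y : 𝔤) ∈ 𝔫 := lcs_le_base 𝔫 j y.2
    have hval : ⁅(x : 𝔤), X⁆ = ⁅(y : 𝔤), X⁆ := by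
      have := congrArg Subtype.val hxy
      simpa [F, LinearMap.restrict_apply, hfapply] using this
    have h := hbij.1 (a₁ := ⟨x, hx𝔫⟩) (a₂ := ⟨y, hy𝔫⟩) (Subtype.ext hval)
    have h2 : (x : 𝔤) = (y : 𝔤) := by simpa using h
    exact Subtype.ext h2
  have hFsurj : Function.Surjective F := LinearMap.injective_iff_surjective.mp hFinj
  obtain ⟨nn, hnn⟩ := hFsurj ⟨Y - X, hY⟩
  set n : 𝔤 := (nn : 𝔤) with hndef
  have hn𝔫 : n ∈ 𝔫 := lcs_le_base 𝔫 j nn.2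
  have hnX : ⁅n, X⁆ = Y - X := by
    have := congrArg Subtype.val hnn
    simpa [F, LinearMap.restrict_apply, hfapply] using this
  set N : Module.End k 𝔤 := ad k 𝔤 n with hN
  have hNnil : IsNilpotent N := hnil n hn𝔫
  have hNapp : ∀ z : 𝔤, N z = ⁅n, z⁆ := fun z => rfl
  set m : ℕ := max (nilpotencyClass N) 2 with hm
  refine ⟨n, nn.2, ?_⟩
  rw [expNil_eq_sum hNnil (le_max_left _ _)]
  have hsum : (∑ i ∈ Finset.range m, ((i.factorial : k)⁻¹) • N ^ i) X
      = ∑ i ∈ Finset.range m, ((i.factorial : k)⁻¹) • (N ^ i) X := by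
    simp [LinearMap.sum_apply]
  rw [hsum, Finset.range_eq_Ico,
    ← Finset.sum_Ico_consecutive _ (Nat.zero_le 2) (le_max_right (nilpotencyClass N) 2)]
  have hfirst : (∑ i ∈ Finset.Ico 0 2, ((i.factorial : k)⁻¹) • (N ^ i) X)
      = X + ⁅n, X⁆ := by
    rw [← Finset.range_eq_Ico]
    simp [Finset.sum_range_succ, hNapp]
  have hpow : ∀ i, 2 ≤ i → (N ^ i) X ∈ lcs 𝔫 (j + 1) := by
    intro i hi
    induction i, hi using Nat.le_induction with
    | base =>
        have h2 : (N ^ 2) X = ⁅n, ⁅n, X⁆⁆ := by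
          rw [pow_two, Module.End.mul_apply, hNapp, hNapp]
        rw [h2]
        exact bracket_mem_lcs_succ 𝔫 hn𝔫 (ha j n nn.2)
    | succ i hi ih =>
        rw [pow_succ', Module.End.mul_apply, hNapp]
        exact lcs_succ_le 𝔫 (j + 1) (bracket_mem_lcs_succ 𝔫 hn𝔫 ih)
  have hrest : (∑ i ∈ Finset.Ico 2 m, ((i.factorial : k)⁻¹) • (N ^ i) X)
      ∈ lcs 𝔫 (j + 1) := by
    refine Submodule.sum_mem _ fun i hi => ?_
    exact Submodule.smul_mem _ _ (hpow i (Finset.mem_Ico.mp hi).1)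
  rw [hfirst, hnX]
  have : X + (Y - X) + (∑ i ∈ Finset.Ico 2 m, ((i.factorial : k)⁻¹) • (N ^ i) X) - Y
      = ∑ i ∈ Finset.Ico 2 m, ((i.factorial : k)⁻¹) • (N ^ i) X := by abel
  rw [this]
  exact hrest
end
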